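/- arXiv:1001.5329 — 4 statements merged into one kernel-verified Lean document; each statement's English description precedes it below -/
import Mathlib

section
/- Let γ ∈ (1,2], λ > 0, and let κ(s) solve κ(0)=0, κ'(s) = λ − κ(s)^γ. Then lim_{λ→0+} κ(a)/λ = a for each fixed a > 0. -/
open Real Set Filter Topology

/-!
Since `κ' ≤ λ` and `κ(0) = 0`, we have `κ(s) ≤ λ s`; feeding this back into the equation gives
`κ' ≥ λ - λ^γ s^γ`, hence `κ(s) ≥ λ s - λ^γ s^(γ+1)/(γ+1)`. Dividing by `λ`, the quotient
`κ(a)/λ` is squeezed between `a - λ^(γ-1) a^(γ+1)/(γ+1)` and `a`, and `λ^(γ-1) → 0` as `γ > 1`.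
-/

theorem le_of_hasDerivWithinAt_Ici_le {f g f' g' : ℝ → ℝ} {x₀ x : ℝ}
    (hf : ∀ s, x₀ ≤ s → HasDerivWithinAt f (f' s) (Ici x₀) s)
    (hg : ∀ s, x₀ ≤ s → HasDerivWithinAt g (g' s) (Ici x₀) s)
    (h₀ : f x₀ ≤ g x₀) (hle : ∀ s, x₀ ≤ s → f' s ≤ g' s) (hx : x₀ ≤ x) : f x ≤ g x :=
  image_le_of_deriv_right_le_deriv_boundary
    (fun s hs => (hf s hs.1).continuousWithinAt.mono Icc_subset_Ici_self)
    (fun s hs => (hf s hs.1).mono (Ici_subset_Ici.2 hs.1)) h₀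
    (fun s hs => (hg s hs.1).continuousWithinAt.mono Icc_subset_Ici_self)
    (fun s hs => (hg s hs.1).mono (Ici_subset_Ici.2 hs.1))
    (fun s hs => hle s hs.1) ⟨hx, le_rfl⟩

structure IsKappaSolution (l γ : ℝ) (κ : ℝ → ℝ) : Prop where
  map_zero : κ 0 = 0
  hasDerivWithinAt : ∀ s, 0 ≤ s → HasDerivWithinAt κ (l - κ s ^ γ) (Ici 0) s
  nonneg : ∀ s, 0 ≤ s → 0 ≤ κ s

namespace IsKappaSolution

variable {l γ : ℝ} {κ : ℝ → ℝ}

theorem le_mul (h : IsKappaSolution l γ κ) {s : ℝ} (hs : 0 ≤ s) : κ s ≤ l * s := by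
  refine le_of_hasDerivWithinAt_Ici_le h.hasDerivWithinAt
    (fun t _ => ((hasDerivAt_id t).const_mul l).hasDerivWithinAt) (by simp [h.map_zero])
    (fun t ht => ?_) hs
  have := rpow_nonneg (h.nonneg t ht) γ
  linarith

theorem sub_le (h : IsKappaSolution l γ κ) (hl : 0 ≤ l) (hγ : 0 ≤ γ) {s : ℝ} (hs : 0 ≤ s) :
    l * s - l ^ γ * s ^ (γ + 1) / (γ + 1) ≤ κ s := by
  have hγ_add_one : γ + 1 ≠ 0 := by linarith
  have hderiv : ∀ t, HasDerivAt (fun t => l * t - l ^ γ * t ^ (γ + 1) / (γ + 1))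
      (l - l ^ γ * t ^ γ) t := fun t =>
    (((hasDerivAt_id t).const_mul l).sub
      (((hasDerivAt_rpow_const (p := γ + 1) (Or.inr (by linarith))).const_mul (l ^ γ)).div_const
        (γ + 1))).congr_deriv (by field_simp; ring_nf)
  refine le_of_hasDerivWithinAt_Ici_le (fun t _ => (hderiv t).hasDerivWithinAt)
    h.hasDerivWithinAt (by simp [h.map_zero, zero_rpow hγ_add_one]) (fun t ht => ?_) hs
  have : κ t ^ γ ≤ l ^ γ * t ^ γ :=
    mul_rpow hl ht ▸ rpow_le_rpow (h.nonneg t ht) (h.le_mul ht) hγ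
  linarith

end IsKappaSolution

theorem stmt_9_general (γ : ℝ) (hγ₁ : 1 < γ) (a : ℝ) (ha : 0 < a)
    (κ : ℝ → ℝ → ℝ)
    (hκ0 : ∀ l : ℝ, 0 < l → κ l 0 = 0)
    (hκ' : ∀ l : ℝ, 0 < l → ∀ s, 0 ≤ s →
      HasDerivWithinAt (κ l) (l - κ l s ^ γ) (Ici 0) s)
    (hκpos : ∀ l : ℝ, 0 < l → ∀ s, 0 ≤ s → 0 ≤ κ l s) :
    Tendsto (fun l : ℝ => κ l a / l) (𝓝[>] (0 : ℝ)) (𝓝 a) := by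
  have hsol : ∀ l, 0 < l → IsKappaSolution l γ (κ l) := fun l hl =>
    ⟨hκ0 l hl, hκ' l hl, hκpos l hl⟩
  have hupper : ∀ᶠ l in 𝓝[>] (0 : ℝ), κ l a / l ≤ a := by
    filter_upwards [self_mem_nhdsWithin] with l (hl : 0 < l)
    rw [div_le_iff₀ hl, mul_comm]
    exact (hsol l hl).le_mul ha.le
  have hlower : ∀ᶠ l in 𝓝[>] (0 : ℝ),
      a - l ^ (γ - 1) * a ^ (γ + 1) / (γ + 1) ≤ κ l a / l := by
    filter_upwards [self_mem_nhdsWithin] with l (hl : 0 < l)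
    have hpow : l ^ γ = l ^ (γ - 1) * l := by
      rw [← rpow_add_one hl.ne', sub_add_cancel]
    rw [le_div_iff₀ hl]
    calc (a - l ^ (γ - 1) * a ^ (γ + 1) / (γ + 1)) * l
        = l * a - l ^ γ * a ^ (γ + 1) / (γ + 1) := by rw [hpow]; ring
      _ ≤ κ l a := (hsol l hl).sub_le hl.le (by linarith) ha.le
  have hlim : Tendsto (fun l : ℝ => a - l ^ (γ - 1) * a ^ (γ + 1) / (γ + 1))
      (𝓝[>] (0 : ℝ)) (𝓝 a) := by
    have hpow : Tendsto (fun l : ℝ => l ^ (γ - 1)) (𝓝[>] 0) (𝓝 0) := by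
      simpa [zero_rpow (sub_ne_zero.2 hγ₁.ne')] using
        ((continuousAt_rpow_const 0 (γ - 1) (Or.inr (by linarith))).tendsto).mono_left
          nhdsWithin_le_nhds
    simpa using tendsto_const_nhds.sub ((hpow.mul_const (a ^ (γ + 1))).div_const (γ + 1))
  exact tendsto_of_tendsto_of_tendsto_of_le_of_le' hlim tendsto_const_nhds hlower hupper

/-- If for each `λ > 0`, `κ_λ` is a nonnegative solution of `κ(0)=0`, `κ' = λ − κ^γ`,
then `κ_λ(a)/λ → a` as `λ → 0+`. -/
theorem stmt_9 (γ : ℝ) (hγ₁ : 1 < γ) (hγ₂ : γ ≤ 2) (a : ℝ) (ha : 0 < a)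
    (κ : ℝ → ℝ → ℝ)
    (hκ0 : ∀ l : ℝ, 0 < l → κ l 0 = 0)
    (hκ' : ∀ l : ℝ, 0 < l → ∀ s, 0 ≤ s →
      HasDerivWithinAt (κ l) (l - κ l s ^ γ) (Ici 0) s)
    (hκpos : ∀ l : ℝ, 0 < l → ∀ s, 0 ≤ s → 0 ≤ κ l s) :
    Tendsto (fun l : ℝ => κ l a / l) (𝓝[>] (0 : ℝ)) (𝓝 a) :=
  stmt_9_general γ hγ₁ a ha κ hκ0 hκ' hκpos
end

section
/- Let γ ∈ (1,2) and let G(λ) = 1 − κ_1(λ,0)^γ/λ, where κ_s(λ,0) solves κ'=λ−κ^γ, κ(0)=0. Then as λ → 0+, G(λ) = 1 − λ^{γ−1} + o(λ^{γ−1}). -/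
open Real Set Filter Topology Asymptotics

/-!
Since `κ_λ ≥ 0`, the ODE gives `κ_λ' ≤ λ`, so `κ_λ(s) ≤ λ s`; feeding this back in gives
`κ_λ' ≥ λ - λ^γ` on `[0, 1]`, so `λ - λ^γ ≤ κ_λ(1) ≤ λ` and `κ_λ(1)/λ → 1` as `λ → 0+`,
because `λ^γ = o(λ)`. Then `G(λ) - (1 - λ^{γ-1}) = λ^{γ-1} (1 - (κ_λ(1)/λ)^γ)`
is `o(λ^{γ-1})`.
-/

theorem le_mul_of_hasDerivWithinAt_sub_rpow {γ l : ℝ} {k : ℝ → ℝ} (hk0 : k 0 = 0)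
    (hk' : ∀ s, 0 ≤ s → HasDerivWithinAt k (l - k s ^ γ) (Ici 0) s)
    (hk : ∀ s, 0 ≤ s → 0 ≤ k s) {s : ℝ} (hs : 0 ≤ s) :
    k s ≤ l * s :=
  image_le_of_deriv_right_le_deriv_boundary (B' := fun _ => l)
    (fun x hx => (hk' x hx.1).continuousWithinAt.mono fun _ hy => hy.1)
    (fun x hx => (hk' x hx.1).mono (Ici_subset_Ici.2 hx.1)) (by simp [hk0])
    (continuous_const_mul l).continuousOn
    (fun x _ => ((hasDerivAt_id x).const_mul l).hasDerivWithinAt.congr_deriv (mul_one l))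
    (fun x hx => sub_le_self l (rpow_nonneg (hk x hx.1) γ)) ⟨hs, le_rfl⟩

theorem sub_rpow_mul_le_of_hasDerivWithinAt_sub_rpow {γ l : ℝ} {k : ℝ → ℝ} (hγ : 0 ≤ γ)
    (hl : 0 ≤ l) (hk0 : k 0 = 0) (hk' : ∀ s, 0 ≤ s → HasDerivWithinAt k (l - k s ^ γ) (Ici 0) s)
    (hk : ∀ s, 0 ≤ s → 0 ≤ k s) {s : ℝ} (hs : 0 ≤ s) :
    (l - (l * s) ^ γ) * s ≤ k s :=
  image_le_of_deriv_right_le_deriv_boundary (f' := fun _ => l - (l * s) ^ γ)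
    (continuous_const_mul _).continuousOn
    (fun x _ => ((hasDerivAt_id x).const_mul _).hasDerivWithinAt.congr_deriv (mul_one _))
    (by simp [hk0])
    (fun x hx => (hk' x hx.1).continuousWithinAt.mono fun _ hy => hy.1)
    (fun x hx => (hk' x hx.1).mono (Ici_subset_Ici.2 hx.1))
    (fun x hx => by
      have hkx : k x ≤ l * s := (le_mul_of_hasDerivWithinAt_sub_rpow hk0 hk' hk hx.1).trans
        (mul_le_mul_of_nonneg_left hx.2.le hl)
      exact sub_le_sub_left (rpow_le_rpow (hk x hx.1) hkx hγ) l)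
    ⟨hs, le_rfl⟩

theorem tendsto_div_self_nhdsGT_zero_of_sub_rpow_le {γ : ℝ} (hγ : 1 < γ) {k : ℝ → ℝ}
    (hlow : ∀ l, 0 < l → l - l ^ γ ≤ k l) (hup : ∀ l, 0 < l → k l ≤ l) :
    Tendsto (fun l => k l / l) (𝓝[>] 0) (𝓝 1) := by
  have hpow : Tendsto (fun l : ℝ => l ^ (γ - 1)) (𝓝[>] 0) (𝓝 0) := by
    simpa [zero_rpow (sub_pos.2 hγ).ne'] using
      ((continuousAt_rpow_const 0 (γ - 1) (Or.inr (sub_pos.2 hγ).le)).tendsto.mono_left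
        nhdsWithin_le_nhds)
  refine tendsto_of_tendsto_of_tendsto_of_le_of_le' (by simpa using hpow.const_sub 1)
    tendsto_const_nhds ?_ ?_ <;> filter_upwards [self_mem_nhdsWithin] with l (hl : 0 < l)
  · rw [le_div_iff₀ hl, sub_mul, one_mul, ← rpow_add_one hl.ne', sub_add_cancel]
    exact hlow l hl
  · exact (div_le_one hl).2 (hup l hl)

theorem isLittleO_rpow_sub_rpow_div_of_tendsto {γ : ℝ} (hγ : 0 ≤ γ) {k : ℝ → ℝ}
    (hk : ∀ l, 0 < l → 0 ≤ k l) (h : Tendsto (fun l => k l / l) (𝓝[>] 0) (𝓝 1)) :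
    (fun l => l ^ (γ - 1) - k l ^ γ / l) =o[𝓝[>] (0 : ℝ)] fun l => l ^ (γ - 1) := by
  have h1 : Tendsto (fun l => 1 - (k l / l) ^ γ) (𝓝[>] 0) (𝓝 0) := by
    simpa using (h.rpow_const (Or.inr hγ)).const_sub 1
  refine (((isLittleO_one_iff ℝ).2 h1).mul_isBigO
    (isBigO_refl (fun l : ℝ => l ^ (γ - 1)) _)).congr' ?_ (by simp)
  filter_upwards [self_mem_nhdsWithin] with l (hl : 0 < l)
  rw [div_rpow (hk l hl) hl.le, sub_mul, one_mul]
  congr 1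
  rw [rpow_sub_one hl.ne']
  field_simp [(rpow_pos_of_pos hl γ).ne']

theorem stmt_10_general (γ : ℝ) (hγ₁ : 1 < γ)
    (κ : ℝ → ℝ → ℝ)
    (hκ0 : ∀ l : ℝ, 0 < l → κ l 0 = 0)
    (hκ' : ∀ l : ℝ, 0 < l → ∀ s, 0 ≤ s →
      HasDerivWithinAt (κ l) (l - κ l s ^ γ) (Ici 0) s)
    (hκpos : ∀ l : ℝ, 0 < l → ∀ s, 0 ≤ s → 0 ≤ κ l s)
    (G : ℝ → ℝ) (hG : ∀ l : ℝ, 0 < l → G l = 1 - κ l 1 ^ γ / l) :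
    (fun l : ℝ => G l - (1 - l ^ (γ - 1)))
      =o[𝓝[>] (0 : ℝ)] (fun l : ℝ => l ^ (γ - 1)) := by
  have hup : ∀ l, 0 < l → κ l 1 ≤ l := fun l hl => by
    simpa using le_mul_of_hasDerivWithinAt_sub_rpow (hκ0 l hl) (hκ' l hl) (hκpos l hl) zero_le_one
  have hlow : ∀ l, 0 < l → l - l ^ γ ≤ κ l 1 := fun l hl => by
    simpa using sub_rpow_mul_le_of_hasDerivWithinAt_sub_rpow (by linarith) hl.le (hκ0 l hl)
      (hκ' l hl) (hκpos l hl) zero_le_one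
  have hratio := tendsto_div_self_nhdsGT_zero_of_sub_rpow_le hγ₁ hlow hup
  refine (isLittleO_rpow_sub_rpow_div_of_tendsto (by linarith)
    (fun l hl => hκpos l hl 1 zero_le_one) hratio).congr' ?_ EventuallyEq.rfl
  filter_upwards [self_mem_nhdsWithin] with l (hl : 0 < l)
  rw [hG l hl]
  ring

/-- With `κ_λ` the solution of `κ(0)=0`, `κ' = λ − κ^γ`, the function
`G(λ) = 1 − κ_λ(1)^γ/λ` satisfies `G(λ) = 1 − λ^{γ−1} + o(λ^{γ−1})` as `λ → 0+`. -/
theorem stmt_10 (γ : ℝ) (hγ₁ : 1 < γ) (hγ₂ : γ < 2)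
    (κ : ℝ → ℝ → ℝ)
    (hκ0 : ∀ l : ℝ, 0 < l → κ l 0 = 0)
    (hκ' : ∀ l : ℝ, 0 < l → ∀ s, 0 ≤ s →
      HasDerivWithinAt (κ l) (l - κ l s ^ γ) (Ici 0) s)
    (hκpos : ∀ l : ℝ, 0 < l → ∀ s, 0 ≤ s → 0 ≤ κ l s)
    (G : ℝ → ℝ) (hG : ∀ l : ℝ, 0 < l → G l = 1 - κ l 1 ^ γ / l) :
    (fun l : ℝ => G l - (1 - l ^ (γ - 1)))
      =o[𝓝[>] (0 : ℝ)] (fun l : ℝ => l ^ (γ - 1)) :=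
  stmt_10_general γ hγ₁ κ hκ0 hκ' hκpos G hG
end

section
/- Let γ ∈ (1,2], a > 0 and 0 ≤ k < l integers. For all λ > 0, the function ψ_{k,l}(λ) = ((½(γ−1)2^{−(l−k)}λ^{γ−1}+1)/(½(γ−1)λ^{γ−1}+1))^{γ/(γ−1)} satisfies ψ_{k,l}(λ) ≤ C₁(2^{−(l−k)γ/(γ−1)} + λ^{−γ}), where C₁ = 2^{1/(γ−1)}(2/(γ−1))^{γ/(γ−1)}. -/
/-!
Write `s = (γ-1)/2 · λ^(γ-1)` and `c = 2^(-(l-k))`. The ratio `(c s + 1)/(s + 1)` is at most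
`c + 1/s`, and since `2/(γ-1) ≥ 1` this is at most `2/(γ-1) · (c + λ^(1-γ))`. Raising to the
power `p = γ/(γ-1) ≥ 1` and using convexity of `x ↦ x^p` in the form
`(x + y)^p ≤ 2^(p-1) (x^p + y^p)` gives the bound, because `p - 1 = 1/(γ-1)` and
`(γ-1) p = γ`.
-/

open Real

lemma Real.rpow_add_le_mul_rpow_add_rpow {x y p : ℝ} (hx : 0 ≤ x) (hy : 0 ≤ y) (hp : 1 ≤ p) :
    (x + y) ^ p ≤ 2 ^ (p - 1) * (x ^ p + y ^ p) := by
  lift x to NNReal using hx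
  lift y to NNReal using hy
  exact_mod_cast NNReal.rpow_add_le_mul_rpow_add_rpow x y hp

lemma div_add_one_le_add_inv {c s : ℝ} (hc : 0 ≤ c) (hs : 0 < s) :
    (c * s + 1) / (s + 1) ≤ c + s⁻¹ := by
  rw [div_le_iff₀ (by positivity)]
  have : s⁻¹ * s = 1 := inv_mul_cancel₀ hs.ne'
  nlinarith [inv_pos.2 hs]

lemma rpow_ratio_le {γ c lam : ℝ} (hγ₁ : 1 < γ) (hγ₃ : γ ≤ 3) (hc : 0 ≤ c) (hlam : 0 < lam) :
    (((γ - 1) / 2 * c * lam ^ (γ - 1) + 1) / ((γ - 1) / 2 * lam ^ (γ - 1) + 1)) ^ (γ / (γ - 1)) ≤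
      2 ^ (1 / (γ - 1)) * (2 / (γ - 1)) ^ (γ / (γ - 1)) * (c ^ (γ / (γ - 1)) + lam ^ (-γ)) := by
  set β := γ - 1 with hβ
  have hβ0 : 0 < β := by linarith
  set p := γ / β
  have hp : 1 ≤ p := by rw [le_div_iff₀ hβ0]; linarith
  have hK : 1 ≤ 2 / β := by rw [le_div_iff₀ hβ0]; linarith
  have hu : 0 < lam ^ (-β) := rpow_pos_of_pos hlam _
  have hratio : (β / 2 * c * lam ^ β + 1) / (β / 2 * lam ^ β + 1) ≤ 2 / β * (c + lam ^ (-β)) :=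
    calc (β / 2 * c * lam ^ β + 1) / (β / 2 * lam ^ β + 1)
        = (c * (β / 2 * lam ^ β) + 1) / (β / 2 * lam ^ β + 1) := by ring_nf
      _ ≤ c + (β / 2 * lam ^ β)⁻¹ := div_add_one_le_add_inv hc (by positivity)
      _ = c + 2 / β * lam ^ (-β) := by rw [rpow_neg hlam.le]; field_simp
      _ ≤ 2 / β * (c + lam ^ (-β)) := by nlinarith
  have hpow_neg : (lam ^ (-β)) ^ p = lam ^ (-γ) := by
    rw [← rpow_mul hlam.le, neg_mul, mul_div_cancel₀ _ hβ0.ne']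
  have hp_sub : p - 1 = 1 / β := by rw [div_sub_one hβ0.ne', hβ]; ring_nf
  calc ((β / 2 * c * lam ^ β + 1) / (β / 2 * lam ^ β + 1)) ^ p
      ≤ (2 / β * (c + lam ^ (-β))) ^ p := rpow_le_rpow (by positivity) hratio (by linarith)
    _ = (2 / β) ^ p * (c + lam ^ (-β)) ^ p := mul_rpow (by positivity) (by positivity)
    _ ≤ (2 / β) ^ p * (2 ^ (p - 1) * (c ^ p + lam ^ (-γ))) := by
        rw [← hpow_neg]
        gcongr
        exact rpow_add_le_mul_rpow_add_rpow hc hu.le hp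
    _ = 2 ^ (1 / β) * (2 / β) ^ p * (c ^ p + lam ^ (-γ)) := by rw [hp_sub]; ring

theorem stmt_12_general (γ : ℝ) (hγ₁ : 1 < γ) (hγ₂ : γ ≤ 2)
    (k l : ℕ) :
    ∀ lam : ℝ, 0 < lam →
      (((γ - 1) / 2 * 2 ^ (-((l : ℝ) - k)) * lam ^ (γ - 1) + 1) /
          ((γ - 1) / 2 * lam ^ (γ - 1) + 1)) ^ (γ / (γ - 1)) ≤
        2 ^ (1 / (γ - 1)) * (2 / (γ - 1)) ^ (γ / (γ - 1)) *
          (2 ^ (-(γ / (γ - 1)) * ((l : ℝ) - k)) + lam ^ (-γ)) := by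
  intro lam hlam
  have hdyadic : ((2 : ℝ) ^ (-((l : ℝ) - k))) ^ (γ / (γ - 1)) =
      2 ^ (-(γ / (γ - 1)) * ((l : ℝ) - k)) := by
    rw [← rpow_mul zero_le_two]
    ring_nf
  rw [← hdyadic]
  exact rpow_ratio_le hγ₁ (by linarith) (by positivity) hlam

/-- Bound on the Laplace transform `ψ_{k,l}` of `2^{k/(γ−1)}Λ_{2^{−l},2^{−k}}(a)`:
`ψ_{k,l}(λ) ≤ C₁(2^{−(l−k)γ/(γ−1)} + λ^{−γ})` with
`C₁ = 2^{1/(γ−1)}(2/(γ−1))^{γ/(γ−1)}`. -/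
theorem stmt_12 (γ : ℝ) (hγ₁ : 1 < γ) (hγ₂ : γ ≤ 2) (a : ℝ) (ha : 0 < a)
    (k l : ℕ) (hkl : k < l) :
    ∀ lam : ℝ, 0 < lam →
      (((γ - 1) / 2 * 2 ^ (-((l : ℝ) - k)) * lam ^ (γ - 1) + 1) /
          ((γ - 1) / 2 * lam ^ (γ - 1) + 1)) ^ (γ / (γ - 1)) ≤
        2 ^ (1 / (γ - 1)) * (2 / (γ - 1)) ^ (γ / (γ - 1)) *
          (2 ^ (-(γ / (γ - 1)) * ((l : ℝ) - k)) + lam ^ (-γ)) :=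
  stmt_12_general γ hγ₁ hγ₂ k l
end

section
/- Let γ ∈ (1,2] and define ũ(b,0+) = c·b^{−1/(γ−1)} for some constant c ≥ 0 and all b > 0, and suppose ũ satisfies the flow relation ũ(a,0+) = u(a−b, ũ(b,0+)) for all 0 < b < a, where u(t,λ) = ((γ−1)t + λ^{−(γ−1)})^{−1/(γ−1)}. If c > 0, then ũ(a,0+) = ((γ−1)a)^{−1/(γ−1)} for all a > 0. -/
open Real

/-!
Raising to the power `-(γ - 1)` linearises the flow: with `β = γ - 1` and `e = -(1/β)`,
`u(t, λ)^{-β} = β t + λ^{-β}` and `(c b^e)^{-β} = c^{-β} b`. The flow relation between `b = 1`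
and `a = 2` then reads `2 c^{-β} = β + c^{-β}`, which forces `c^{-β} = β`, i.e. `c = β^e`.
-/

namespace Real

variable {β x : ℝ}

theorem rpow_neg_one_div_rpow_neg (hx : 0 ≤ x) (hβ : β ≠ 0) :
    (x ^ (-(1 / β))) ^ (-β) = x := by
  rw [← rpow_mul hx, show -(1 / β) * -β = 1 by field_simp, rpow_one]

theorem mul_rpow_neg_one_div {c : ℝ} (hc : 0 < c) (hx : 0 ≤ x) (hβ : β ≠ 0) :
    c * x ^ (-(1 / β)) = (c ^ (-β) * x) ^ (-(1 / β)) := by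
  rw [mul_rpow (rpow_nonneg hc.le _) hx, ← rpow_mul hc.le,
    show -β * -(1 / β) = 1 by field_simp, rpow_one]

end Real

theorem stmt_17_general (γ : ℝ) (hγ₁ : 1 < γ)
    (u : ℝ → ℝ → ℝ)
    (hu : ∀ t l : ℝ, u t l = ((γ - 1) * t + l ^ (-(γ - 1))) ^ (-(1 / (γ - 1))))
    (c : ℝ) (hc : 0 < c) (v : ℝ → ℝ)
    (hv : ∀ b : ℝ, 0 < b → v b = c * b ^ (-(1 / (γ - 1))))
    (hflow : ∀ a b : ℝ, 0 < b → b < a → v a = u (a - b) (v b)) :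
    ∀ a : ℝ, 0 < a → v a = ((γ - 1) * a) ^ (-(1 / (γ - 1))) := by
  set β := γ - 1
  have hβ : 0 < β := sub_pos.mpr hγ₁
  set k := c ^ (-β)
  have hk : 0 < k := rpow_pos_of_pos hc _
  have hv' : ∀ b, 0 < b → v b = (k * b) ^ (-(1 / β)) := fun b hb ↦
    (hv b hb).trans (mul_rpow_neg_one_div hc hb.le hβ.ne')
  have hlinear : k * 2 = β * (2 - 1) + k * 1 := by
    have h := hflow 2 1 one_pos one_lt_two
    rw [hu, hv' 2 two_pos, hv' 1 one_pos, rpow_neg_one_div_rpow_neg (by positivity) hβ.ne'] at h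
    exact (rpow_left_inj (by positivity) (by positivity) (by simp [hβ.ne'])).mp h
  have hkβ : k = β := by linarith
  intro a ha
  rw [hv' a ha, hkβ]

/-- If `ũ(b) = c·b^{−1/(γ−1)}` with `c > 0` satisfies the flow relation
`ũ(a) = u(a−b, ũ(b))` for all `0 < b < a`, then `ũ(a) = ((γ−1)a)^{−1/(γ−1)}`. -/
theorem stmt_17 (γ : ℝ) (hγ₁ : 1 < γ) (hγ₂ : γ ≤ 2)
    (u : ℝ → ℝ → ℝ)
    (hu : ∀ t l : ℝ, u t l = ((γ - 1) * t + l ^ (-(γ - 1))) ^ (-(1 / (γ - 1))))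
    (c : ℝ) (hc : 0 < c) (v : ℝ → ℝ)
    (hv : ∀ b : ℝ, 0 < b → v b = c * b ^ (-(1 / (γ - 1))))
    (hflow : ∀ a b : ℝ, 0 < b → b < a → v a = u (a - b) (v b)) :
    ∀ a : ℝ, 0 < a → v a = ((γ - 1) * a) ^ (-(1 / (γ - 1))) :=
  stmt_17_general γ hγ₁ u hu c hc v hv hflow
end
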